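/- arXiv:2107.05185 — 4 statements merged into one kernel-verified Lean document; each statement's English description precedes it below -/
import Mathlib

section
/- (Forbidden region, abstract version) Let C > 2, ω ≥ C⁴m², and suppose nonnegative reals A, B, D satisfy D ≤ C m^{3/2} B + C m^{1/2} B A, A ≤ √ω, and the negative energy condition (ω/2)A + (1/2)B² - (1/4)D < 0. Then A < C²m³/(2ω). In particular there is no such configuration with C²m³/(2ω) ≤ A ≤ √ω. -/
/-!
Write `s = √m`, so that the Gagliardo–Nirenberg bound reads `D ≤ C s B (m + A)`. Negativity of
the energy and AM–GM in `B` eliminate `B` and `D`, leaving `16 ω A < C² m (m + A)²`.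
If `A ≤ m` this gives `A < C² m³ / (4 ω)`. If `A > m` it gives `4 ω < C² m A`, which is
impossible because `C² m ≤ √ω` and `A ≤ √ω` force `C² m A ≤ ω`.
-/

open Real

lemma rpow_three_halves_eq_mul_sqrt {m : ℝ} (hm : 0 < m) : m ^ ((3 : ℝ) / 2) = m * √m := by
  rw [show (3 : ℝ) / 2 = 1 + 1 / 2 by norm_num, rpow_add hm, rpow_one, ← sqrt_eq_rpow]

lemma sixteen_mul_lt_of_energy_neg {C s ω A B D : ℝ}
    (hGN : D ≤ C * s * B * (s ^ 2 + A))
    (hE : ω / 2 * A + 1 / 2 * B ^ 2 - 1 / 4 * D < 0) :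
    16 * ω * A < C ^ 2 * s ^ 2 * (s ^ 2 + A) ^ 2 := by
  have amgm := two_mul_le_add_sq B (C / 4 * s * (s ^ 2 + A))
  nlinarith

lemma mul_le_of_le_sqrt {C m ω A : ℝ} (hω : C ^ 4 * m ^ 2 ≤ ω) (hA : 0 ≤ A)
    (hconstr : A ≤ √ω) : C ^ 2 * m * A ≤ ω := by
  have hsq : (C ^ 2 * m) ^ 2 ≤ ω := by linarith [show C ^ 4 * m ^ 2 = (C ^ 2 * m) ^ 2 by ring]
  calc C ^ 2 * m * A ≤ √ω * √ω := mul_le_mul (le_sqrt_of_sq_le hsq) hconstr hA (sqrt_nonneg ω)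
    _ = ω := mul_self_sqrt ((sq_nonneg _).trans hsq)

lemma lt_of_sixteen_mul_lt {C m ω A : ℝ} (hC : C ≠ 0) (hm : 0 < m) (hω : 0 < ω) (hA : 0 ≤ A)
    (hCmA : C ^ 2 * m * A ≤ ω) (h : 16 * ω * A < C ^ 2 * m * (m + A) ^ 2) :
    A < C ^ 2 * m ^ 3 / (2 * ω) := by
  have hC2m : 0 < C ^ 2 * m := by positivity
  rw [lt_div_iff₀ (by positivity)]
  rcases le_or_gt A m with hAm | hmA
  · have hsq : (m + A) ^ 2 ≤ (2 * m) ^ 2 := pow_le_pow_left₀ (by linarith) (by linarith) 2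
    nlinarith [mul_le_mul_of_nonneg_left hsq hC2m.le, mul_pos hC2m (pow_pos hm 2)]
  · have hsq : (m + A) ^ 2 ≤ (2 * A) ^ 2 := pow_le_pow_left₀ (by linarith) (by linarith) 2
    nlinarith [mul_le_mul_of_nonneg_left hsq hC2m.le, mul_le_mul_of_nonneg_left hCmA hA]

theorem stmt_5_general (C m ω A B D : ℝ) (hC : 2 < C) (hm : 0 < m) (hω : C ^ 4 * m ^ 2 ≤ ω)
    (hA : 0 ≤ A)
    (hGN : D ≤ C * m ^ ((3:ℝ)/2) * B + C * m ^ ((1:ℝ)/2) * B * A)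
    (hconstr : A ≤ Real.sqrt ω)
    (hE : ω / 2 * A + 1 / 2 * B ^ 2 - 1 / 4 * D < 0) :
    A < C ^ 2 * m ^ 3 / (2 * ω) := by
  have hs : √m ^ 2 = m := sq_sqrt hm.le
  have hGN' : D ≤ C * √m * B * (√m ^ 2 + A) := by
    rw [rpow_three_halves_eq_mul_sqrt hm, ← sqrt_eq_rpow] at hGN
    rw [hs]
    linarith
  have key := sixteen_mul_lt_of_energy_neg hGN' hE
  rw [hs] at key
  exact lt_of_sixteen_mul_lt (by positivity) hm (lt_of_lt_of_le (by positivity) hω) hA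
    (mul_le_of_le_sqrt hω hA hconstr) key

/-- Forbidden region (abstract version): with `C > 2`, `ω ≥ C⁴m²`, if nonnegative
`A = ‖u‖²_{Σ̇_y}`, `B = ‖∂_z u‖_{L²}`, `D = ‖u‖⁴_{L⁴}` satisfy the
Gagliardo–Nirenberg bound, the constraint `A ≤ √ω`, and the energy is negative,
then `A < C²m³/(2ω)`. -/
theorem stmt_5 (C m ω A B D : ℝ) (hC : 2 < C) (hm : 0 < m) (hω : C ^ 4 * m ^ 2 ≤ ω)
    (hA : 0 ≤ A) (hB : 0 ≤ B) (hD : 0 ≤ D)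
    (hGN : D ≤ C * m ^ ((3:ℝ)/2) * B + C * m ^ ((1:ℝ)/2) * B * A)
    (hconstr : A ≤ Real.sqrt ω)
    (hE : ω / 2 * A + 1 / 2 * B ^ 2 - 1 / 4 * D < 0) :
    A < C ^ 2 * m ^ 3 / (2 * ω) :=
  stmt_5_general C m ω A B D hC hm hω hA hGN hconstr hE
end

section
/- (A priori bound from negative energy) Let C > 2, m > 0, ω ≥ C⁴m², and suppose nonnegative reals A, B, D satisfy D ≤ C m^{3/2} B + C m^{1/2} B A, A ≤ √ω, and (ω/2)A + (1/2)B² - (1/4)D < 0. Then B² ≤ C²m³/2 + C⁶m⁷/(8ω²). -/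
/-! Write `s = C √m` and `w = √ω`, so that the two hypotheses combine into
`2 w² A + 2 B² < s B (m + A)`. If `s B > 2 w²`, the worst case is `A = w`, which forces
`2 B < s (m + w)` and then `4 w² < s² (m + w) ≤ w (m + w)`, i.e. `3 w < m`; this is impossible
since `w ≥ C² m > m / 3`. Hence `s B ≤ 2 w²`, the `A`-term has a nonpositive coefficient,
and `2 B² < s m B` gives `B² ≤ C² m³ / 4`. -/

lemma sq_le_of_two_mul_sq_le_mul {B k : ℝ} (h : 2 * B ^ 2 ≤ k * B) :
    B ^ 2 ≤ k ^ 2 / 4 := by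
  nlinarith [sq_nonneg (2 * B - k)]

section NegativeEnergy

variable {s m w A B : ℝ}

lemma mul_le_two_mul_sq_of_energy_neg (hm : 0 ≤ m) (hA : 0 ≤ A) (hB : 0 ≤ B) (hAw : A ≤ w)
    (hsw : s ^ 2 ≤ w) (hms : m ≤ 3 * s ^ 2)
    (hE : 2 * w ^ 2 * A + 2 * B ^ 2 < s * B * (m + A)) :
    s * B ≤ 2 * w ^ 2 := by
  by_contra! hlarge
  have hw : 0 ≤ w := hA.trans hAw
  have hsB : 0 < s * B := lt_of_le_of_lt (by positivity) hlarge
  have hBpos : 0 < B := lt_of_le_of_ne hB (by rintro rfl; simp at hsB)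
  have hspos : 0 < s := pos_of_mul_pos_left hsB hB
  have hworst : A * (s * B - 2 * w ^ 2) ≤ w * (s * B - 2 * w ^ 2) :=
    mul_le_mul_of_nonneg_right hAw (by linarith)
  have hBlt : 2 * B < s * (m + w) := by nlinarith
  have hw_lt : 4 * w ^ 2 < s ^ 2 * (m + w) := by nlinarith
  have hsq_le : s ^ 2 * (m + w) ≤ w * (m + w) := mul_le_mul_of_nonneg_right hsw (by linarith)
  have hm_le : m ≤ 3 * w := by linarith
  nlinarith [mul_le_mul_of_nonneg_left hm_le hw]

lemma sq_le_of_energy_neg (hm : 0 ≤ m) (hA : 0 ≤ A) (hB : 0 ≤ B) (hAw : A ≤ w)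
    (hsw : s ^ 2 ≤ w) (hms : m ≤ 3 * s ^ 2)
    (hE : 2 * w ^ 2 * A + 2 * B ^ 2 < s * B * (m + A)) :
    B ^ 2 ≤ (s * m) ^ 2 / 4 := by
  have hsB := mul_le_two_mul_sq_of_energy_neg hm hA hB hAw hsw hms hE
  have hA_term : A * (s * B - 2 * w ^ 2) ≤ 0 := mul_nonpos_of_nonneg_of_nonpos hA (by linarith)
  exact sq_le_of_two_mul_sq_le_mul (by linarith)

end NegativeEnergy

theorem stmt_6_general (C m ω A B D : ℝ) (hC : 2 < C) (hm : 0 < m) (hω : C ^ 4 * m ^ 2 ≤ ω)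
    (hA : 0 ≤ A) (hB : 0 ≤ B)
    (hGN : D ≤ C * m ^ ((3:ℝ)/2) * B + C * m ^ ((1:ℝ)/2) * B * A)
    (hconstr : A ≤ Real.sqrt ω)
    (hE : ω / 2 * A + 1 / 2 * B ^ 2 - 1 / 4 * D < 0) :
    B ^ 2 ≤ C ^ 2 * m ^ 3 / 2 + C ^ 6 * m ^ 7 / (8 * ω ^ 2) := by
  set s := C * m ^ ((1:ℝ)/2)
  have hs2 : s ^ 2 = C ^ 2 * m := by
    rw [mul_pow, ← Real.sqrt_eq_rpow, Real.sq_sqrt hm.le]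
  have hm32 : m ^ ((3:ℝ)/2) = m * m ^ ((1:ℝ)/2) := by
    rw [show (3:ℝ)/2 = 1 + 1/2 by norm_num, Real.rpow_add hm, Real.rpow_one]
  have hsw : s ^ 2 ≤ Real.sqrt ω := by
    rw [hs2, ← Real.sqrt_sq (by positivity : 0 ≤ C ^ 2 * m)]
    exact Real.sqrt_le_sqrt (by linarith)
  have hω' : Real.sqrt ω ^ 2 = ω := Real.sq_sqrt (le_trans (by positivity) hω)
  have hms : m ≤ 3 * s ^ 2 := by
    rw [hs2, ← mul_assoc]
    exact le_mul_of_one_le_left hm.le (by nlinarith)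
  have hEnergy : 2 * Real.sqrt ω ^ 2 * A + 2 * B ^ 2 < s * B * (m + A) := by
    rw [hm32] at hGN; rw [hω']; linarith
  have hbound : B ^ 2 ≤ C ^ 2 * m ^ 3 / 4 := by
    have h := sq_le_of_energy_neg hm.le hA hB hconstr hsw hms hEnergy
    convert h using 2
    rw [mul_pow, hs2]; ring
  have hCm : 0 ≤ C ^ 2 * m ^ 3 := by positivity
  have hrest : 0 ≤ C ^ 6 * m ^ 7 / (8 * ω ^ 2) := by positivity
  linarith

/-- A priori bound from negative energy: with `C > 2`, `ω ≥ C⁴m²`, if nonnegative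
`A, B, D` satisfy the Gagliardo–Nirenberg bound, the constraint `A ≤ √ω`, and
the energy is negative, then `B² ≤ C²m³/2 + C⁶m⁷/(8ω²)`. -/
theorem stmt_6 (C m ω A B D : ℝ) (hC : 2 < C) (hm : 0 < m) (hω : C ^ 4 * m ^ 2 ≤ ω)
    (hA : 0 ≤ A) (hB : 0 ≤ B) (hD : 0 ≤ D)
    (hGN : D ≤ C * m ^ ((3:ℝ)/2) * B + C * m ^ ((1:ℝ)/2) * B * A)
    (hconstr : A ≤ Real.sqrt ω)
    (hE : ω / 2 * A + 1 / 2 * B ^ 2 - 1 / 4 * D < 0) :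
    B ^ 2 ≤ C ^ 2 * m ^ 3 / 2 + C ^ 6 * m ^ 7 / (8 * ω ^ 2) :=
  stmt_6_general C m ω A B D hC hm hω hA hB hGN hconstr hE
end

section
/- For every function u ∈ H¹(ℝ³) written in coordinates x = (y,z) ∈ ℝ² × ℝ, one has ‖u‖⁴_{L⁴(ℝ³)} ≲ ‖u‖_{L²(ℝ³)} ‖∇_y u‖²_{L²(ℝ³)} ‖∂_z u‖_{L²(ℝ³)}, i.e., there is a universal constant C > 0 such that ∫_{ℝ³}|u|⁴ dx ≤ C ‖u‖_{L²} ‖∇_y u‖²_{L²} ‖∂_z u‖_{L²}. -/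
/-!
For a square-integrable `C¹` function `v` on `ℝ`, the fundamental theorem of calculus applied to
`‖v‖²` gives `‖v t‖² ≤ ‖v s‖² + 2 ∫ ‖v‖ ‖v'‖`, and `‖v s‖²` cannot stay bounded below for all
`s ≥ t`, so `‖v t‖² ≤ 2 ∫ ‖v‖ ‖v'‖`. In `z` this bounds the `L²(ℝ²)` norm of every slice
`u(·, z)` by `2 ‖u‖₂ ‖∂_z u‖₂`. In the two directions of `ℝ²` it bounds `‖w(a, b)‖⁴` by a product
of a function of `a` and a function of `b`, which after Fubini and Cauchy–Schwarz is
Ladyzhenskaya's inequality `‖w‖₄⁴ ≤ 4 ‖w‖₂² ‖∇w‖₂²`. Applying it on each slice and integrating in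
`z` gives the theorem with constant `8`.
-/

open MeasureTheory ENNReal

namespace ENNReal

lemma rpow_half_mul_self (a : ℝ≥0∞) : a ^ ((1:ℝ)/2) * a ^ ((1:ℝ)/2) = a := by
  rw [← ENNReal.rpow_add_of_nonneg _ _ (by norm_num) (by norm_num)]; norm_num

lemma rpow_half_mul_rpow_half_le_add (a b : ℝ≥0∞) : a ^ ((1:ℝ)/2) * b ^ ((1:ℝ)/2) ≤ a + b :=
  calc a ^ ((1:ℝ)/2) * b ^ ((1:ℝ)/2)
      ≤ (a + b) ^ ((1:ℝ)/2) * (a + b) ^ ((1:ℝ)/2) := by gcongr <;> simp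
    _ = a + b := rpow_half_mul_self _

lemma lintegral_mul_le_L2_mul_L2 {α : Type*} [MeasurableSpace α] {μ : Measure α}
    {f g : α → ℝ≥0∞} (hf : AEMeasurable f μ) (hg : AEMeasurable g μ) :
    ∫⁻ x, f x * g x ∂μ ≤ (∫⁻ x, f x ^ 2 ∂μ) ^ ((1:ℝ)/2) * (∫⁻ x, g x ^ 2 ∂μ) ^ ((1:ℝ)/2) := by
  simpa [ENNReal.rpow_two] using
    ENNReal.lintegral_mul_le_Lp_mul_Lq μ Real.HolderConjugate.two_two hf hg

end ENNReal

section Fubini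

variable {α β : Type*} [MeasurableSpace α] [MeasurableSpace β] {μ : Measure α} {ν : Measure β}
  [SFinite ν] {f : α × β → ℝ≥0∞}

lemma ae_lintegral_prod_right_lt_top (hf : AEMeasurable f (μ.prod ν))
    (hfin : ∫⁻ p, f p ∂(μ.prod ν) ≠ ∞) : ∀ᵐ x ∂μ, ∫⁻ y, f (x, y) ∂ν < ∞ :=
  ae_lt_top' hf.lintegral_prod_right' (by rwa [← lintegral_prod _ hf])

lemma ae_lintegral_prod_left_lt_top [SFinite μ] (hf : AEMeasurable f (μ.prod ν))
    (hfin : ∫⁻ p, f p ∂(μ.prod ν) ≠ ∞) : ∀ᵐ y ∂ν, ∫⁻ x, f (x, y) ∂μ < ∞ :=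
  ae_lt_top' hf.lintegral_prod_left' (by rwa [← lintegral_prod_symm _ hf])

end Fubini

lemma le_of_ae_le_add_of_lintegral_ne_top {α : Type*} [MeasurableSpace α] {μ : Measure α}
    (hμ : μ Set.univ = ∞) {g : α → ℝ≥0∞} (hg : ∫⁻ x, g x ∂μ ≠ ∞) {c K : ℝ≥0∞}
    (h : ∀ᵐ x ∂μ, c ≤ g x + K) : c ≤ K := by
  by_contra! hKc
  refine hg (eq_top_iff.2 ?_)
  calc ∞ = ∫⁻ _, (c - K) ∂μ := by
        rw [lintegral_const, hμ, ENNReal.mul_top (tsub_pos_of_lt hKc).ne']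
    _ ≤ ∫⁻ x, g x ∂μ := lintegral_mono_ae (h.mono fun x hx => tsub_le_iff_right.2 hx)

section OneDim

variable {E : Type*} [NormedAddCommGroup E] [InnerProductSpace ℝ E] {v v' : ℝ → E}

lemma enorm_sq_le_enorm_sq_add_two_mul_lintegral (hv : ∀ r, HasDerivAt v (v' r) r)
    (hv' : Continuous v') {t s : ℝ} (hts : t ≤ s) :
    ‖v t‖ₑ ^ 2 ≤ ‖v s‖ₑ ^ 2 + 2 * ∫⁻ r, ‖v r‖ₑ * ‖v' r‖ₑ := by
  set F : ℝ → ℝ := fun r => ‖v r‖ ^ 2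
  have hF : ∀ r, HasDerivAt F (2 * inner ℝ (v r) (v' r)) r := fun r => (hv r).norm_sq
  have hF' : deriv F = fun r => 2 * inner ℝ (v r) (v' r) := funext fun r => (hF r).deriv
  have hFC : ContDiff ℝ 1 F := contDiff_one_iff_deriv.2
    ⟨fun r => (hF r).differentiableAt, hF' ▸ continuous_const.mul
      ((continuous_iff_continuousAt.2 fun r => (hv r).continuousAt).inner hv')⟩
  have henorm : ∀ r, ‖v r‖ₑ ^ 2 = ENNReal.ofReal (F r) := fun r => by
    rw [ENNReal.ofReal_pow (norm_nonneg _), ofReal_norm]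
  calc ‖v t‖ₑ ^ 2 ≤ ENNReal.ofReal (F s + |F s - F t|) := by
        rw [henorm]; exact ENNReal.ofReal_le_ofReal (by linarith [neg_abs_le (F s - F t)])
    _ ≤ ‖v s‖ₑ ^ 2 + ‖F s - F t‖ₑ := by
        rw [henorm, Real.enorm_eq_ofReal_abs]; exact ENNReal.ofReal_add_le
    _ ≤ ‖v s‖ₑ ^ 2 + ∫⁻ r, ‖deriv F r‖ₑ := by
        gcongr
        exact (enorm_sub_le_lintegral_deriv_of_contDiffOn_Icc hFC.contDiffOn hts).trans
          (setLIntegral_le_lintegral _ _)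
    _ ≤ ‖v s‖ₑ ^ 2 + ∫⁻ r, 2 * (‖v r‖ₑ * ‖v' r‖ₑ) := by
        gcongr with r
        rw [hF', enorm_mul]
        gcongr
        · simp [Real.enorm_eq_ofReal_abs]
        · exact ENNReal.coe_le_coe.2 (nnnorm_inner_le_nnnorm (𝕜 := ℝ) (v r) (v' r))
    _ = ‖v s‖ₑ ^ 2 + 2 * ∫⁻ r, ‖v r‖ₑ * ‖v' r‖ₑ := by
        rw [lintegral_const_mul' _ _ ofNat_ne_top]

lemma enorm_sq_le_two_mul_lintegral (hv : ∀ r, HasDerivAt v (v' r) r) (hv' : Continuous v')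
    (hL2 : ∫⁻ r, ‖v r‖ₑ ^ 2 ≠ ∞) (t : ℝ) :
    ‖v t‖ₑ ^ 2 ≤ 2 * ∫⁻ r, ‖v r‖ₑ * ‖v' r‖ₑ :=
  le_of_ae_le_add_of_lintegral_ne_top (μ := volume.restrict (Set.Ici t)) (by simp)
    (ne_top_of_le_ne_top hL2 (setLIntegral_le_lintegral _ _))
    (ae_restrict_of_forall_mem measurableSet_Ici fun _ hs =>
      enorm_sq_le_enorm_sq_add_two_mul_lintegral hv hv' hs)

end OneDim

section TwoDim

variable {E : Type*} [NormedAddCommGroup E] [InnerProductSpace ℝ E] {w w₁ w₂ : ℝ × ℝ → E}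

lemma lintegral_enorm_pow_four_le_mul (hw : Continuous w) (hw₁ : Continuous w₁)
    (hw₂ : Continuous w₂) (hd₁ : ∀ a b, HasDerivAt (fun t => w (t, b)) (w₁ (a, b)) a)
    (hd₂ : ∀ a b, HasDerivAt (fun t => w (a, t)) (w₂ (a, b)) b)
    (hL2 : ∫⁻ p, ‖w p‖ₑ ^ 2 ≠ ∞) :
    ∫⁻ p, ‖w p‖ₑ ^ 4
      ≤ 4 * (∫⁻ p, ‖w p‖ₑ * ‖w₁ p‖ₑ) * ∫⁻ p, ‖w p‖ₑ * ‖w₂ p‖ₑ := by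
  rw [Measure.volume_eq_prod] at hL2 ⊢
  have hw₁m : Measurable fun p => ‖w p‖ₑ * ‖w₁ p‖ₑ := hw.enorm.measurable.mul hw₁.enorm.measurable
  have hw₂m : Measurable fun p => ‖w p‖ₑ * ‖w₂ p‖ₑ := hw.enorm.measurable.mul hw₂.enorm.measurable
  have hwm : AEMeasurable (fun p => ‖w p‖ₑ ^ 2) (volume.prod volume) :=
    (hw.enorm.measurable.pow_const 2).aemeasurable
  set G : ℝ → ℝ≥0∞ := fun a => 2 * ∫⁻ b, ‖w (a, b)‖ₑ * ‖w₂ (a, b)‖ₑ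
  set F : ℝ → ℝ≥0∞ := fun b => 2 * ∫⁻ a, ‖w (a, b)‖ₑ * ‖w₁ (a, b)‖ₑ
  have hbound : ∀ᵐ p ∂(volume.prod volume), ‖w p‖ₑ ^ 4 ≤ G p.1 * F p.2 := by
    filter_upwards [Measure.quasiMeasurePreserving_fst.ae (ae_lintegral_prod_right_lt_top hwm hL2),
      Measure.quasiMeasurePreserving_snd.ae (ae_lintegral_prod_left_lt_top hwm hL2)]
      with ⟨a, b⟩ ha hb
    rw [show 4 = 2 + 2 from rfl, pow_add]
    exact mul_le_mul' (enorm_sq_le_two_mul_lintegral (hd₂ a) (by fun_prop) ha.ne b)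
      (enorm_sq_le_two_mul_lintegral (fun t => hd₁ t b) (by fun_prop) hb.ne a)
  calc ∫⁻ p, ‖w p‖ₑ ^ 4 ∂(volume.prod volume)
      ≤ ∫⁻ p, G p.1 * F p.2 ∂(volume.prod volume) := lintegral_mono_ae hbound
    _ = (∫⁻ a, G a) * ∫⁻ b, F b :=
        lintegral_prod_mul (hw₂m.lintegral_prod_right'.const_mul 2).aemeasurable
          (hw₁m.lintegral_prod_left'.const_mul 2).aemeasurable
    _ = _ := by
        simp only [G, F]
        rw [lintegral_const_mul' _ _ ofNat_ne_top, lintegral_const_mul' _ _ ofNat_ne_top,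
          ← lintegral_prod _ hw₂m.aemeasurable, ← lintegral_prod_symm _ hw₁m.aemeasurable]
        ring

theorem lintegral_enorm_pow_four_le (hw : Continuous w) (hw₁ : Continuous w₁)
    (hw₂ : Continuous w₂) (hd₁ : ∀ a b, HasDerivAt (fun t => w (t, b)) (w₁ (a, b)) a)
    (hd₂ : ∀ a b, HasDerivAt (fun t => w (a, t)) (w₂ (a, b)) b)
    (hL2 : ∫⁻ p, ‖w p‖ₑ ^ 2 ≠ ∞) :
    ∫⁻ p, ‖w p‖ₑ ^ 4
      ≤ 4 * (∫⁻ p, ‖w p‖ₑ ^ 2) * ∫⁻ p, (‖w₁ p‖ₑ ^ 2 + ‖w₂ p‖ₑ ^ 2) := by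
  set A := ∫⁻ p, ‖w p‖ₑ ^ 2
  have hm := hw.enorm.measurable.aemeasurable (μ := volume)
  calc ∫⁻ p, ‖w p‖ₑ ^ 4
      ≤ 4 * (∫⁻ p, ‖w p‖ₑ * ‖w₁ p‖ₑ) * ∫⁻ p, ‖w p‖ₑ * ‖w₂ p‖ₑ :=
        lintegral_enorm_pow_four_le_mul hw hw₁ hw₂ hd₁ hd₂ hL2
    _ ≤ 4 * (A ^ ((1:ℝ)/2) * (∫⁻ p, ‖w₁ p‖ₑ ^ 2) ^ ((1:ℝ)/2))
          * (A ^ ((1:ℝ)/2) * (∫⁻ p, ‖w₂ p‖ₑ ^ 2) ^ ((1:ℝ)/2)) := by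
        gcongr
        · exact lintegral_mul_le_L2_mul_L2 hm hw₁.enorm.measurable.aemeasurable
        · exact lintegral_mul_le_L2_mul_L2 hm hw₂.enorm.measurable.aemeasurable
    _ = 4 * (A ^ ((1:ℝ)/2) * A ^ ((1:ℝ)/2))
          * ((∫⁻ p, ‖w₁ p‖ₑ ^ 2) ^ ((1:ℝ)/2) * (∫⁻ p, ‖w₂ p‖ₑ ^ 2) ^ ((1:ℝ)/2)) := by ring
    _ ≤ 4 * A * ((∫⁻ p, ‖w₁ p‖ₑ ^ 2) + ∫⁻ p, ‖w₂ p‖ₑ ^ 2) := by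
        rw [rpow_half_mul_self]; gcongr; exact rpow_half_mul_rpow_half_le_add _ _
    _ = 4 * A * ∫⁻ p, (‖w₁ p‖ₑ ^ 2 + ‖w₂ p‖ₑ ^ 2) := by
        rw [lintegral_add_left (hw₁.enorm.measurable.pow_const 2)]

end TwoDim

section ThreeDim

variable {E : Type*} [NormedAddCommGroup E] [InnerProductSpace ℝ E]

lemma lintegral_enorm_sq_prodMk_le {α : Type*} [MeasurableSpace α] {μ : Measure α} [SFinite μ]
    {u u' : α × ℝ → E} (hu : Measurable fun x => ‖u x‖ₑ) (hu' : Measurable fun x => ‖u' x‖ₑ)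
    (hd : ∀ y t, HasDerivAt (fun r => u (y, r)) (u' (y, t)) t)
    (hc : ∀ y, Continuous fun t => u' (y, t))
    (hL2 : ∫⁻ x, ‖u x‖ₑ ^ 2 ∂(μ.prod volume) ≠ ∞) (z : ℝ) :
    ∫⁻ y, ‖u (y, z)‖ₑ ^ 2 ∂μ ≤ 2 * ∫⁻ x, ‖u x‖ₑ * ‖u' x‖ₑ ∂(μ.prod volume) := by
  rw [lintegral_prod_symm _ (hu.pow_const 2).aemeasurable] at hL2
  refine le_of_ae_le_add_of_lintegral_ne_top (μ := volume.restrict (Set.Ici z))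
    (g := fun s => ∫⁻ y, ‖u (y, s)‖ₑ ^ 2 ∂μ) (by simp)
    (ne_top_of_le_ne_top hL2 (setLIntegral_le_lintegral _ _))
    (ae_restrict_of_forall_mem measurableSet_Ici fun s hs => ?_)
  calc ∫⁻ y, ‖u (y, z)‖ₑ ^ 2 ∂μ
      ≤ ∫⁻ y, (‖u (y, s)‖ₑ ^ 2 + 2 * ∫⁻ r, ‖u (y, r)‖ₑ * ‖u' (y, r)‖ₑ) ∂μ :=
        lintegral_mono fun y => enorm_sq_le_enorm_sq_add_two_mul_lintegral (hd y) (hc y) hs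
    _ = ∫⁻ y, ‖u (y, s)‖ₑ ^ 2 ∂μ + 2 * ∫⁻ x, ‖u x‖ₑ * ‖u' x‖ₑ ∂(μ.prod volume) := by
        have hus : Measurable fun y => ‖u (y, s)‖ₑ ^ 2 :=
          (hu.comp measurable_prodMk_right).pow_const 2
        rw [lintegral_add_left hus, lintegral_const_mul' _ _ ofNat_ne_top,
          lintegral_prod (fun x => ‖u x‖ₑ * ‖u' x‖ₑ) (hu.mul hu').aemeasurable]

lemma lintegral_enorm_pow_four_prodMk_le {u : (ℝ × ℝ) × ℝ → E} (hu : ContDiff ℝ 1 u) {z : ℝ}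
    (hz : ∫⁻ y, ‖u (y, z)‖ₑ ^ 2 ≠ ∞) :
    ∫⁻ y, ‖u (y, z)‖ₑ ^ 4
      ≤ 4 * (∫⁻ y, ‖u (y, z)‖ₑ ^ 2)
        * ∫⁻ y, (‖fderiv ℝ u (y, z) ((1, 0), 0)‖ₑ ^ 2 + ‖fderiv ℝ u (y, z) ((0, 1), 0)‖ₑ ^ 2) := by
  have hdc : ∀ v, Continuous fun x => fderiv ℝ u x v := fun v =>
    (hu.continuous_fderiv one_ne_zero).clm_apply continuous_const
  have hu' : ∀ x, HasFDerivAt u (fderiv ℝ u x) x := fun x =>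
    (hu.differentiable one_ne_zero x).hasFDerivAt
  have hz' : Continuous fun y : ℝ × ℝ => (y, z) := continuous_id.prodMk continuous_const
  exact lintegral_enorm_pow_four_le (w₁ := fun y => fderiv ℝ u (y, z) ((1, 0), 0))
    (w₂ := fun y => fderiv ℝ u (y, z) ((0, 1), 0)) (hu.continuous.comp hz') ((hdc _).comp hz')
    ((hdc _).comp hz')
    (fun a b => (hu' _).comp_hasDerivAt a
      (((hasDerivAt_id a).prodMk (hasDerivAt_const a b)).prodMk (hasDerivAt_const a z)))
    (fun a b => (hu' _).comp_hasDerivAt b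
      (((hasDerivAt_const b a).prodMk (hasDerivAt_id b)).prodMk (hasDerivAt_const b z)))
    hz

theorem lintegral_enorm_pow_four_le_anisotropic {u : (ℝ × ℝ) × ℝ → E} (hu : ContDiff ℝ 1 u)
    (hL2 : ∫⁻ x, ‖u x‖ₑ ^ 2 ≠ ∞) :
    ∫⁻ x, ‖u x‖ₑ ^ 4
      ≤ 8 * (∫⁻ x, ‖u x‖ₑ ^ 2) ^ ((1:ℝ)/2)
        * (∫⁻ x, (‖fderiv ℝ u x ((1, 0), 0)‖ₑ ^ 2 + ‖fderiv ℝ u x ((0, 1), 0)‖ₑ ^ 2))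
        * (∫⁻ x, ‖fderiv ℝ u x ((0, 0), 1)‖ₑ ^ 2) ^ ((1:ℝ)/2) := by
  have hdc : ∀ v, Continuous fun x => fderiv ℝ u x v := fun v =>
    (hu.continuous_fderiv one_ne_zero).clm_apply continuous_const
  have hd₃ : ∀ y t, HasDerivAt (fun r => u (y, r)) (fderiv ℝ u (y, t) ((0, 0), 1)) t :=
    fun y t => (hu.differentiable one_ne_zero _).hasFDerivAt.comp_hasDerivAt t
      ((hasDerivAt_const t y).prodMk (hasDerivAt_id t))
  have hum := hu.continuous.enorm.measurable
  have hQm : Measurable fun x =>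
      ‖fderiv ℝ u x ((1, 0), 0)‖ₑ ^ 2 + ‖fderiv ℝ u x ((0, 1), 0)‖ₑ ^ 2 :=
    ((hdc _).enorm.measurable.pow_const 2).add ((hdc _).enorm.measurable.pow_const 2)
  set K := ∫⁻ x, ‖u x‖ₑ * ‖fderiv ℝ u x ((0, 0), 1)‖ₑ
  rw [Measure.volume_eq_prod (ℝ × ℝ) ℝ] at hL2 ⊢
  have hsup : ∀ z, ∫⁻ y, ‖u (y, z)‖ₑ ^ 2 ≤ 2 * K :=
    lintegral_enorm_sq_prodMk_le hum (hdc _).enorm.measurable hd₃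
      (fun y => (hdc _).comp (continuous_const.prodMk continuous_id)) hL2
  have hslice : ∀ᵐ z, ∫⁻ y, ‖u (y, z)‖ₑ ^ 4 ≤ 4 * (2 * K) * ∫⁻ y,
      (‖fderiv ℝ u (y, z) ((1, 0), 0)‖ₑ ^ 2 + ‖fderiv ℝ u (y, z) ((0, 1), 0)‖ₑ ^ 2) := by
    filter_upwards [ae_lintegral_prod_left_lt_top (hum.pow_const 2).aemeasurable hL2] with z hz
    grw [lintegral_enorm_pow_four_prodMk_le hu hz.ne, hsup z]
  calc ∫⁻ x, ‖u x‖ₑ ^ 4 ∂(volume.prod volume)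
      = ∫⁻ z, ∫⁻ y, ‖u (y, z)‖ₑ ^ 4 := lintegral_prod_symm _ (hum.pow_const 4).aemeasurable
    _ ≤ ∫⁻ z, 4 * (2 * K) * ∫⁻ y,
          (‖fderiv ℝ u (y, z) ((1, 0), 0)‖ₑ ^ 2 + ‖fderiv ℝ u (y, z) ((0, 1), 0)‖ₑ ^ 2) :=
        lintegral_mono_ae hslice
    _ = 8 * K * ∫⁻ x, (‖fderiv ℝ u x ((1, 0), 0)‖ₑ ^ 2 + ‖fderiv ℝ u x ((0, 1), 0)‖ₑ ^ 2)
          ∂(volume.prod volume) := by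
        rw [lintegral_const_mul _ hQm.lintegral_prod_left',
          ← lintegral_prod_symm _ hQm.aemeasurable]
        ring
    _ ≤ 8 * ((∫⁻ x, ‖u x‖ₑ ^ 2 ∂(volume.prod volume)) ^ ((1:ℝ)/2)
          * (∫⁻ x, ‖fderiv ℝ u x ((0, 0), 1)‖ₑ ^ 2 ∂(volume.prod volume)) ^ ((1:ℝ)/2))
          * ∫⁻ x, (‖fderiv ℝ u x ((1, 0), 0)‖ₑ ^ 2 + ‖fderiv ℝ u x ((0, 1), 0)‖ₑ ^ 2)
            ∂(volume.prod volume) := by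
        gcongr
        exact lintegral_mul_le_L2_mul_L2 hum.aemeasurable (hdc _).enorm.measurable.aemeasurable
    _ = _ := by ring

end ThreeDim

/-- Anisotropic Gagliardo–Nirenberg inequality on `ℝ³ = ℝ²_y × ℝ_z`:
there is a universal constant `C > 0` with
`∫ |u|⁴ ≤ C ‖u‖_{L²} ‖∇_y u‖²_{L²} ‖∂_z u‖_{L²}` for every `u ∈ H¹(ℝ³)`. -/
theorem stmt_7 :
    ∃ C : ℝ, 0 < C ∧ ∀ u : (ℝ × ℝ) × ℝ → ℂ, ContDiff ℝ 1 u →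
      MemLp u 2 MeasureTheory.volume →
      (∫⁻ x : (ℝ × ℝ) × ℝ, (‖u x‖₊ : ℝ≥0∞) ^ 4)
        ≤ ENNReal.ofReal C
          * (∫⁻ x : (ℝ × ℝ) × ℝ, (‖u x‖₊ : ℝ≥0∞) ^ 2) ^ ((1:ℝ)/2)
          * (∫⁻ x : (ℝ × ℝ) × ℝ,
              ((‖fderiv ℝ u x ((1, 0), 0)‖₊ : ℝ≥0∞) ^ 2
                + (‖fderiv ℝ u x ((0, 1), 0)‖₊ : ℝ≥0∞) ^ 2))
          * (∫⁻ x : (ℝ × ℝ) × ℝ, (‖fderiv ℝ u x ((0, 0), 1)‖₊ : ℝ≥0∞) ^ 2) ^ ((1:ℝ)/2) := by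
  refine ⟨8, by norm_num, fun u hu hu2 => ?_⟩
  have hL2 : ∫⁻ x, ‖u x‖ₑ ^ 2 ≠ ∞ := by
    simpa [ENNReal.rpow_two] using
      (lintegral_rpow_enorm_lt_top_of_eLpNorm_lt_top two_ne_zero ofNat_ne_top hu2.2).ne
  rw [show ENNReal.ofReal 8 = 8 by norm_num]
  exact lintegral_enorm_pow_four_le_anisotropic hu hL2
end

section
/- (Lower bound / coercivity of the energy) Let C > 2, m > 0, ω ≥ C⁴m². Suppose nonnegative reals A, B, D satisfy D ≤ C m^{3/2} B + C m^{1/2} B A and A ≤ √ω. Then (ω/2)A + (1/2)B² - (1/4)D ≥ (ω/4)A + (1/4)B² - C²m³/8. In particular, 𝒥_ω(m) > -∞, and any u in the constraint set with E_ω(u) < 0 satisfies ω‖u‖²_{Σ̇_y} + ‖∂_z u‖²_{L²} ≤ (C²m³)/2. -/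
/-!
Two applications of Young's inequality `2xy ≤ x² + y²` bound the Gagliardo–Nirenberg right-hand
side by `B² + C²m³/2 + C²m A²/2`, and `ω ≥ C⁴m²` gives `C²m ≤ √ω`, so that the constraint
`A ≤ √ω` turns `C²m A²` into at most `ω A`. Hence `D ≤ ω A/2 + B² + C²m³/2`, which is the lower bound.
-/

lemma Real.rpow_div_two_sq {x : ℝ} (hx : 0 ≤ x) (y : ℝ) : (x ^ (y / 2)) ^ 2 = x ^ y := by
  rw [← Real.rpow_natCast, ← Real.rpow_mul hx]
  norm_num

lemma mul_sq_le_of_sq_le_of_le_sqrt {k ω A : ℝ} (hk : k ^ 2 ≤ ω) (hA : 0 ≤ A)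
    (hAω : A ≤ √ω) : k * A ^ 2 ≤ ω * A :=
  calc k * A ^ 2 ≤ √ω * A ^ 2 := by
        gcongr
        exact (le_abs_self k).trans (Real.abs_le_sqrt hk)
    _ ≤ √ω * (√ω * A) := by
        rw [sq]
        gcongr
    _ = ω * A := by rw [← mul_assoc, Real.mul_self_sqrt ((sq_nonneg k).trans hk)]

lemma le_of_gagliardoNirenberg_of_le_sqrt {C m ω A B D : ℝ} (hm : 0 ≤ m)
    (hω : C ^ 4 * m ^ 2 ≤ ω) (hA : 0 ≤ A)
    (hGN : D ≤ C * m ^ ((3:ℝ)/2) * B + C * m ^ ((1:ℝ)/2) * B * A) (hconstr : A ≤ √ω) :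
    D ≤ ω * A / 2 + B ^ 2 + C ^ 2 * m ^ 3 / 2 := by
  have hm32 : (m ^ ((3:ℝ)/2)) ^ 2 = m ^ 3 := by
    rw [Real.rpow_div_two_sq hm]; norm_cast
  have hm12 : (m ^ ((1:ℝ)/2)) ^ 2 = m := by rw [Real.rpow_div_two_sq hm, Real.rpow_one]
  have young₁ := two_mul_le_add_sq (C * m ^ ((3:ℝ)/2)) B
  have young₂ := two_mul_le_add_sq (C * m ^ ((1:ℝ)/2) * A) B
  have hA2 : C ^ 2 * m * A ^ 2 ≤ ω * A :=
    mul_sq_le_of_sq_le_of_le_sqrt (by linear_combination hω) hA hconstr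
  rw [mul_pow, hm32] at young₁
  rw [mul_pow, mul_pow, hm12] at young₂
  linarith

theorem stmt_9_general (C m ω A B D : ℝ) (hm : 0 < m) (hω : C ^ 4 * m ^ 2 ≤ ω)
    (hA : 0 ≤ A)
    (hGN : D ≤ C * m ^ ((3:ℝ)/2) * B + C * m ^ ((1:ℝ)/2) * B * A)
    (hconstr : A ≤ Real.sqrt ω) :
    ω / 4 * A + 1 / 4 * B ^ 2 - C ^ 2 * m ^ 3 / 8
      ≤ ω / 2 * A + 1 / 2 * B ^ 2 - 1 / 4 * D ∧
    (ω / 2 * A + 1 / 2 * B ^ 2 - 1 / 4 * D < 0 →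
      ω * A + B ^ 2 ≤ C ^ 2 * m ^ 3 / 2) := by
  have hD := le_of_gagliardoNirenberg_of_le_sqrt hm.le hω hA hGN hconstr
  have hωA : 0 ≤ ω * A := mul_nonneg ((by positivity : 0 ≤ C ^ 4 * m ^ 2).trans hω) hA
  exact ⟨by linarith, fun _ => by linarith⟩

/-- Lower bound / coercivity of the energy: with `C > 2`, `ω ≥ C⁴m²`, if
nonnegative `A, B, D` satisfy the Gagliardo–Nirenberg bound and `A ≤ √ω`, then
`E_ω = (ω/2)A + (1/2)B² - (1/4)D ≥ (ω/4)A + (1/4)B² - C²m³/8`; in particular,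
if `E_ω < 0` then `ωA + B² ≤ C²m³/2`. -/
theorem stmt_9 (C m ω A B D : ℝ) (hC : 2 < C) (hm : 0 < m) (hω : C ^ 4 * m ^ 2 ≤ ω)
    (hA : 0 ≤ A) (hB : 0 ≤ B) (hD : 0 ≤ D)
    (hGN : D ≤ C * m ^ ((3:ℝ)/2) * B + C * m ^ ((1:ℝ)/2) * B * A)
    (hconstr : A ≤ Real.sqrt ω) :
    ω / 4 * A + 1 / 4 * B ^ 2 - C ^ 2 * m ^ 3 / 8
      ≤ ω / 2 * A + 1 / 2 * B ^ 2 - 1 / 4 * D ∧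
    (ω / 2 * A + 1 / 2 * B ^ 2 - 1 / 4 * D < 0 →
      ω * A + B ^ 2 ≤ C ^ 2 * m ^ 3 / 2) :=
  stmt_9_general C m ω A B D hm hω hA hGN hconstr
end
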